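/- arXiv:0906.4478 — 2 statements merged into one kernel-verified Lean document; each statement's English description precedes it below -/
import Mathlib

section
/- Let n ≥ 5 be an odd integer and let m ≥ r ≥ 1 be integers with m even. Then (n+1)r ≤ nm holds if and only if for every integer t with 2m ≤ t ≤ nm/2 one has max(0, ⌈(mn - 2t)/(n-4)⌉) ≥ max(0, ⌈(r(n+1) - 2t)/(n-3)⌉). -/
/-!
If `(n + 1) r ≤ n m`, then for every `t` the numerator `r (n + 1) - 2t` is at most `m n - 2t`
while the denominator `n - 3` exceeds `n - 4`, so the left ceiling never beats the right one.
Conversely, if `(n + 1) r > n m`, then `m > 0` and, `m` being even, `t = nm/2` is an admissible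
integer at which the right-hand side vanishes while the left-hand side is positive.
-/

section CeilDiv

variable {K : Type*} [Field K] [LinearOrder K] [IsStrictOrderedRing K] [FloorRing K]

theorem max_zero_ceil_div_le_max_zero_ceil_div {a b d d' : K} (hab : a ≤ b) (hd' : 0 < d')
    (hdd' : d' ≤ d) : max 0 ⌈a / d⌉ ≤ max 0 ⌈b / d'⌉ := by
  have hd : 0 < d := hd'.trans_le hdd'
  refine max_le (le_max_left _ _) ?_
  rcases le_or_gt 0 b with hb | hb
  · refine (Int.ceil_le_ceil ?_).trans (le_max_right _ _)
    calc a / d ≤ b / d := div_le_div_of_nonneg_right hab hd.le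
      _ ≤ b / d' := div_le_div_of_nonneg_left hb hd' hdd'
  · refine le_trans ?_ (le_max_left _ _)
    rw [Int.ceil_le, Int.cast_zero]
    exact div_nonpos_of_nonpos_of_nonneg (hab.trans hb.le) hd.le

theorem max_zero_ceil_div_pos {a d : K} (ha : 0 < a) (hd : 0 < d) : 0 < max 0 ⌈a / d⌉ :=
  lt_max_of_lt_right (Int.ceil_pos.mpr (div_pos ha hd))

end CeilDiv

theorem stmt3_general (n m r : ℤ) (hn : 5 ≤ n) (hmr : r ≤ m)
    (hm : Even m) :
    (n + 1) * r ≤ n * m ↔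
      ∀ t : ℤ, 2 * m ≤ t → 2 * t ≤ n * m →
        max 0 ⌈((r * (n + 1) - 2 * t : ℤ) : ℚ) / ((n - 3 : ℤ) : ℚ)⌉ ≤
          max 0 ⌈((m * n - 2 * t : ℤ) : ℚ) / ((n - 4 : ℤ) : ℚ)⌉ := by
  constructor
  · intro h t _ _
    apply max_zero_ceil_div_le_max_zero_ceil_div
    · exact_mod_cast (by linarith : r * (n + 1) - 2 * t ≤ m * n - 2 * t)
    · exact_mod_cast (by linarith : 0 < n - 4)
    · exact_mod_cast (by linarith : n - 4 ≤ n - 3)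
  · intro h
    by_contra! hlt
    have hm_pos : 0 < m := by nlinarith
    obtain ⟨k, hk⟩ := hm.mul_left n
    have hB : m * n - 2 * k = 0 := by linarith
    have hA : 0 < r * (n + 1) - 2 * k := by linarith
    have hk_le := h k (by nlinarith) (by omega)
    rw [hB, Int.cast_zero, zero_div, Int.ceil_zero, max_self] at hk_le
    exact hk_le.not_gt <|
      max_zero_ceil_div_pos (by exact_mod_cast hA) (by exact_mod_cast (by linarith : 0 < n - 3))

/-- The numerical heart of Theorem 3.4(b) in the case `m` even: for `n ≥ 5` odd and
integers `m ≥ r ≥ 1` with `m` even, `(n+1)r ≤ nm` holds iff for every integer `t` with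
`2m ≤ t ≤ nm/2` one has
`max(0, ⌈(mn - 2t)/(n-4)⌉) ≥ max(0, ⌈(r(n+1) - 2t)/(n-3)⌉)`. -/
theorem stmt3 (n m r : ℤ) (hn : 5 ≤ n) (hodd : Odd n) (hr : 1 ≤ r) (hmr : r ≤ m)
    (hm : Even m) :
    (n + 1) * r ≤ n * m ↔
      ∀ t : ℤ, 2 * m ≤ t → 2 * t ≤ n * m →
        max 0 ⌈((r * (n + 1) - 2 * t : ℤ) : ℚ) / ((n - 3 : ℤ) : ℚ)⌉ ≤
          max 0 ⌈((m * n - 2 * t : ℤ) : ℚ) / ((n - 4 : ℤ) : ℚ)⌉ :=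
  stmt3_general n m r hn hmr hm
end

section
/- For every positive integer m, there exist non-negative integers a, b, c such that ⌈48m/17⌉ = 3a + 17b + 48c and m = a + 6b + 17c. -/
/-- Decomposition used in Proposition 4.4: for every positive integer `m`, there are
non-negative integers `a, b, c` with `⌈48m/17⌉ = 3a + 17b + 48c` and `m = a + 6b + 17c`. -/
theorem stmt17 (m : ℕ) (hm : 0 < m) :
    ∃ a b c : ℕ, ⌈(48 * (m : ℚ)) / 17⌉ = 3 * a + 17 * b + 48 * c ∧ m = a + 6 * b + 17 * c := by
  refine ⟨m % 17 % 6, m % 17 / 6, m / 17, ?_, by omega⟩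
  obtain ⟨k, hk⟩ : ∃ k, (48 * m + 16) / 17 = k := ⟨_, rfl⟩
  have h1 := Nat.div_add_mod (48 * m + 16) 17
  have h2 : (48 * m + 16) % 17 < 17 := Nat.mod_lt _ (by norm_num)
  rw [hk] at h1
  have h : ⌈(48 * (m : ℚ)) / 17⌉ = (k : ℤ) := by
    rw [Int.ceil_eq_iff]
    constructor
    · rw [lt_div_iff₀ (by norm_num)]
      have h4 : (17:ℚ) * k < 48 * m + 17 := by exact_mod_cast by omega
      push_cast
      linarith
    · rw [div_le_iff₀ (by norm_num)]
      have h4 : (48:ℚ) * m ≤ 17 * k := by exact_mod_cast by omega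
      push_cast
      linarith
  rw [h]
  have : k = 3 * (m % 17 % 6) + 17 * (m % 17 / 6) + 48 * (m / 17) := by omega
  push_cast [this]
  ring
end
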